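/- Let p be an odd prime, let n ≥ p + 4 be an integer, and let G = 2.A_n be the double cover of the alternating group, with projection π : G → A_n and central element z of order 2. Let g ∈ G be an element such that π(g) has cycle type (p, 2, 2, 1^{n−p−4}). Then every irreducible complex character χ of G with χ(z) ≠ χ(1) satisfies χ(g) = 0. -/

import Mathlib

/-! Double covers `2^α.S_n` of the symmetric groups, via the presentation with
generators `z, t_1, …, t_{n-1}` and relations `z² = 1`, `t_j² = z^α`,
`(t_j t_{j+1})³ = z^α`, `[z, t_j] = 1`, and `t_j t_k = z t_k t_j` for `|j - k| > 1`.
Here `α = 0` gives `2^+.S_n` and `α = 1` gives `2^-.S_n`. -/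

namespace DoubleCover

/-- Generators: `Sum.inl ()` is `z`; `Sum.inr j` is `t_{j+1}` for `j : Fin (n - 1)`. -/
abbrev Gen (n : ℕ) := Unit ⊕ Fin (n - 1)

/-- The word `z` in the free group on the generators. -/
def zw (n : ℕ) : FreeGroup (Gen n) := FreeGroup.of (Sum.inl ())

/-- The word `t_{j+1}` in the free group on the generators. -/
def tw (n : ℕ) (j : Fin (n - 1)) : FreeGroup (Gen n) := FreeGroup.of (Sum.inr j)

/-- The relations of the presentation of `2^α.S_n`. -/
def rels (n α : ℕ) : Set (FreeGroup (Gen n)) :=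
  {r | r = zw n ^ 2
    ∨ (∃ j, r = tw n j ^ 2 * (zw n ^ α)⁻¹)
    ∨ (∃ j k : Fin (n - 1), (j : ℕ) + 1 = (k : ℕ) ∧
        r = (tw n j * tw n k) ^ 3 * (zw n ^ α)⁻¹)
    ∨ (∃ j, r = zw n * tw n j * (zw n)⁻¹ * (tw n j)⁻¹)
    ∨ (∃ j k : Fin (n - 1), 1 < Nat.dist (j : ℕ) (k : ℕ) ∧
        r = tw n j * tw n k * (zw n * tw n k * tw n j)⁻¹)}

/-- The double cover `2^α.S_n` of the symmetric group `S_n`. -/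
abbrev Cover (n α : ℕ) := PresentedGroup (rels n α)

/-- The central element `z` of `2^α.S_n`. -/
def z (n α : ℕ) : Cover n α := PresentedGroup.of (Sum.inl ())

/-- The generator `t_{j+1}` of `2^α.S_n`, lifting the transposition `(j+1, j+2)`. -/
def t (n α : ℕ) (j : Fin (n - 1)) : Cover n α := PresentedGroup.of (Sum.inr j)

end DoubleCover

/-- A subgroup is an elementary abelian 2-subgroup iff every element squares to `1`
(this forces it to be abelian). -/
def IsElemAbelianTwo {G : Type*} [Group G] (E : Subgroup G) : Prop :=
  ∀ x ∈ E, x ^ 2 = 1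

/-
Write `t_i` for the generator lifting the transposition `(i i+1)`, points numbered from `0`.
The permutation `(0 1 … p-1)(p p+1)(p+2 p+3)` lifts to `g₀ = L · t_p t_{p+2}`, `L = t_0 ⋯ t_{p-2}`.
Let `Y = u²` with `u = t_p t_{p+1} t_{p+2}`, a lift of the 4-cycle `(p p+1 p+2 p+3)`. Each `t_j`,
`j ≥ p`, anticommutes with the `p - 1` factors of `L`, an even number, so `Y` commutes with `L`.
The braid relations give `Y t_p = t_{p+2} Y`; as `Y² = u⁴` lies over the identity it is central,
so also `Y t_{p+2} = t_p Y`, and since `t_p`, `t_{p+2}` anticommute, `Y g₀ Y⁻¹ = z g₀`.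
Permutations of cycle type `(p, 2, 2)` are conjugate in `S_n`, so a conjugate of `Y`, still over
an even permutation, conjugates `g` to `z g`. By Schur's lemma `z` acts on `V` by a scalar `c ≠ 1`,
and `χ(g) = χ(z g) = c χ(g)` forces `χ(g) = 0`.
-/

open Equiv Equiv.Perm Subgroup

section Group

variable {G : Type*} [Group G]

theorem braid_of_sq_eq_of_mul_pow_three {ζ a b : G} (ha : a ^ 2 = ζ) (hb : b ^ 2 = ζ)
    (hζ : ζ ^ 2 = 1) (hab : (a * b) ^ 3 = ζ) : a * b * a = b * a * b := by
  have h₁ : (a * b * a) * (b * a * b) = ζ := by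
    rw [← hab]; simp only [pow_succ, pow_zero, one_mul, mul_assoc]
  have h₂ : (b * a * b) * (b * a * b) = ζ :=
    calc (b * a * b) * (b * a * b) = b * a * b ^ 2 * a * b := by rw [sq]; simp only [mul_assoc]
      _ = b * (a ^ 2) ^ 2 * b := by rw [hb, ← ha]; group
      _ = ζ := by rw [ha, hζ, mul_one, ← sq, hb]
  exact mul_right_cancel (h₁.trans h₂.symm)

theorem mul_list_prod_eq_of_forall_mul_eq {z x : G} (hz : z ∈ center G) {L : List G}
    (h : ∀ y ∈ L, x * y = z * (y * x)) : x * L.prod = z ^ L.length * (L.prod * x) := by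
  induction L with
  | nil => simp
  | cons y L ih =>
    rw [List.forall_mem_cons] at h
    have hzL : z ^ L.length ∈ center G := pow_mem hz _
    calc x * (y :: L).prod = z * (y * (x * L.prod)) := by
          rw [List.prod_cons, ← mul_assoc, h.1]; group
      _ = z ^ (y :: L).length * ((y :: L).prod * x) := by
          rw [ih h.2, ← mul_assoc y, mem_center_iff.mp hzL y, List.prod_cons,
            List.length_cons, pow_succ']; group

theorem commute_list_prod_of_forall_mul_eq {z x : G} (hz : z ∈ center G) (hz2 : z ^ 2 = 1)
    {L : List G} (hL : Even L.length) (h : ∀ y ∈ L, x * y = z * (y * x)) :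
    Commute x L.prod := by
  obtain ⟨k, hk⟩ := hL
  have := mul_list_prod_eq_of_forall_mul_eq hz h
  rwa [hk, ← two_mul, pow_mul, hz2, one_pow, one_mul] at this

section Braid

variable {z a b c : G} (hz : z ∈ center G) (hz2 : z ^ 2 = 1) (hab : a * b * a = b * a * b)
  (hbc : b * c * b = c * b * c) (hac : a * c = z * (c * a))
include hz hz2 hab hbc hac

theorem semiconjBy_mul_mul_sq : SemiconjBy ((a * b * c) ^ 2) a c := by
  have hzc : ∀ w, w * z = z * w := mem_center_iff.mp hz
  have hca : c * a = z * (a * c) := by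
    rw [hac, ← mul_assoc, ← sq, hz2, one_mul]
  have hua : SemiconjBy (a * b * c) a (z * b) := by
    unfold SemiconjBy
    calc a * b * c * a = a * b * (c * a) := by group
      _ = z * (a * b * a) * c := by rw [hca, ← mul_assoc, hzc]; group
      _ = z * b * (a * b * c) := by rw [hab]; group
  have hub : SemiconjBy (a * b * c) b (z * c) := by
    unfold SemiconjBy
    calc a * b * c * b = a * (b * c * b) := by group
      _ = z * (c * a) * b * c := by rw [hbc, ← hac]; group
      _ = z * c * (a * b * c) := by group
  have huz : SemiconjBy (a * b * c) z z := hzc _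
  have := (huz.mul_right hub).mul_left hua
  rwa [← sq, ← mul_assoc, ← sq, hz2, one_mul] at this

theorem semiconjBy_mul_mul_sq_mul (hu : (a * b * c) ^ 4 ∈ center G) :
    SemiconjBy ((a * b * c) ^ 2) (a * c) (z * (a * c)) := by
  set Y := (a * b * c) ^ 2
  have hYa : SemiconjBy Y a c := semiconjBy_mul_mul_sq hz hz2 hab hbc hac
  have hYc : SemiconjBy Y c a := by
    have hY2 : Y * Y * a = a * (Y * Y) := by
      rw [← sq, ← pow_mul]; exact mem_center_iff.mp hu a |>.symm
    unfold SemiconjBy at hYa ⊢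
    calc Y * c = Y * Y * a * Y⁻¹ := by rw [mul_assoc Y Y, hYa]; group
      _ = a * Y := by rw [hY2]; group
  have hca : c * a = z * (a * c) := by
    rw [hac, ← mul_assoc, ← sq, hz2, one_mul]
  exact hca ▸ hYa.mul_right hYc

end Braid

theorem exists_mem_comap_semiconjBy_of_isConj {H : Type*} [Group H] (π : G →* H)
    (hπ : Function.Surjective π) (hker : π.ker ≤ center G) {K : Subgroup H} [K.Normal]
    {z Y g₀ g : G} (hz : z ∈ center G) (hY : SemiconjBy Y g₀ (z * g₀)) (hYK : π Y ∈ K)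
    (hg : IsConj (π g₀) (π g)) : ∃ Y' ∈ K.comap π, SemiconjBy Y' g (z * g) := by
  obtain ⟨ρ, hρ⟩ := isConj_iff.mp hg
  obtain ⟨r, rfl⟩ := hπ ρ
  obtain ⟨k, hk, rfl⟩ : ∃ k ∈ center G, g = k * (r * g₀ * r⁻¹) := by
    refine ⟨g * (r * g₀ * r⁻¹)⁻¹, hker ?_, by group⟩
    rw [MonoidHom.mem_ker, map_mul, map_inv, map_mul, map_mul, map_inv, hρ, mul_inv_cancel]
  refine ⟨r * Y * r⁻¹, by simpa using ‹K.Normal›.conj_mem _ hYK (π r), ?_⟩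
  have hconj := hY.map (MulAut.conj r)
  have hzr : MulAut.conj r z = z := by
    rw [MulAut.conj_apply, mem_center_iff.mp hz r, mul_inv_cancel_right]
  rw [map_mul, hzr] at hconj
  have hkY : SemiconjBy (MulAut.conj r Y) k k := mem_center_iff.mp hk _
  simpa only [MulAut.conj_apply, ← mul_assoc, mem_center_iff.mp hk z] using hkY.mul_right hconj

section RangeLists

variable {X : Type*} {x : ℕ → X} {N : ℕ}

theorem nodup_map_range' (hx : Set.InjOn x (Set.Iio N)) {s k : ℕ} (h : s + k ≤ N) :
    ((List.range' s k).map x).Nodup :=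
  (List.nodup_range' ..).map_on fun i hi j hj hij =>
    hx (by simp at hi ⊢; omega) (by simp at hj ⊢; omega) hij

theorem disjoint_map_range' (hx : Set.InjOn x (Set.Iio N)) {s k s' k' : ℕ} (h : s + k ≤ s')
    (h' : s' + k' ≤ N) : ((List.range' s k).map x).Disjoint ((List.range' s' k').map x) := by
  simp only [List.disjoint_left, List.mem_map, List.mem_range'_1, not_exists, not_and]
  rintro _ ⟨i, hi, rfl⟩ j hj hij
  have := hx (by simp; omega) (by simp; omega) hij
  omega

variable [DecidableEq X]

theorem map_prod_map_range'_eq_formPerm {G : Type*} [Group G] (π : G →* Perm X) {T : ℕ → G}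
    {s k : ℕ} (h : ∀ i, s ≤ i → i < s + k → π (T i) = swap (x i) (x (i + 1))) :
    π ((List.range' s k).map T).prod = ((List.range' s (k + 1)).map x).formPerm := by
  induction k generalizing s with
  | zero => simp
  | succ k ih =>
    rw [List.range'_succ, List.map_cons, List.prod_cons, map_mul, h s le_rfl (by omega),
      ih fun i hi hi' => h i (by omega) (by omega)]
    simp [List.range'_succ]

theorem cycleType_formPerm_of_nodup [Fintype X] {l : List X} (hl : l.Nodup)
    (h2 : 2 ≤ l.length) : l.formPerm.cycleType = {l.length} := by
  rw [(List.isCycle_formPerm hl h2).cycleType,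
    List.support_formPerm_of_nodup l hl (by rintro _ rfl; simp at h2),
    List.toFinset_card_of_nodup hl]

theorem cycleType_formPerm_mul_swap_mul_swap [Fintype X] {p : ℕ} (hp : 2 ≤ p)
    (hx : Set.InjOn x (Set.Iio (p + 4))) :
    (((List.range' 0 p).map x).formPerm *
      (swap (x p) (x (p + 1)) * swap (x (p + 2)) (x (p + 3)))).cycleType = {p, 2, 2} := by
  have hpair : ∀ s, swap (x s) (x (s + 1)) = ((List.range' s 2).map x).formPerm := fun s => rfl
  have hn : ∀ s k, s + k ≤ p + 4 → ((List.range' s k).map x).Nodup :=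
    fun _ _ => nodup_map_range' hx
  have hdisj : ∀ s k s' k', 2 ≤ k → 2 ≤ k' → s + k ≤ s' → s' + k' ≤ p + 4 →
      ((List.range' s k).map x).formPerm.Disjoint ((List.range' s' k').map x).formPerm :=
    fun s k s' k' hk hk' h h' => (List.formPerm_disjoint_iff (hn s k (by omega)) (hn s' k' h')
      (by simpa using hk) (by simpa using hk')).mpr (disjoint_map_range' hx h h')
  rw [hpair, hpair, Disjoint.cycleType_mul, Disjoint.cycleType_mul,
    cycleType_formPerm_of_nodup (hn 0 p (by omega)) (by simpa using hp),
    cycleType_formPerm_of_nodup (hn p 2 (by omega)) (by simp),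
    cycleType_formPerm_of_nodup (hn (p + 2) 2 (by omega)) (by simp)]
  · simp only [List.length_map, List.length_range']; rfl
  · exact hdisj p 2 (p + 2) 2 le_rfl le_rfl le_rfl (by omega)
  · exact (hdisj 0 p p 2 hp le_rfl (by omega) (by omega)).mul_right
      (hdisj 0 p (p + 2) 2 hp le_rfl (by omega) (by omega))

end RangeLists

theorem exists_semiconjBy_mul_of_cover_relations {G X : Type*} [Group G] [DecidableEq X] [Fintype X]
    (π : G →* Perm X) (hker : π.ker ≤ center G) {z : G} (hz : z ∈ center G) (hz2 : z ^ 2 = 1)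
    {T : ℕ → G} {x : ℕ → X} {p : ℕ} (hp : Odd p) (hp2 : 2 ≤ p)
    (hx : Set.InjOn x (Set.Iio (p + 4)))
    (hπT : ∀ i < p + 3, π (T i) = swap (x i) (x (i + 1)))
    (hbraid : ∀ i, i + 1 < p + 3 → T i * T (i + 1) * T i = T (i + 1) * T i * T (i + 1))
    (hanti : ∀ i j, i < p + 3 → j < p + 3 → 1 < Nat.dist i j → T i * T j = z * (T j * T i)) :
    ∃ g₀ Y : G, SemiconjBy Y g₀ (z * g₀) ∧ (π g₀).cycleType = {p, 2, 2} ∧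
      π Y ∈ alternatingGroup X := by
  set L := ((List.range' 0 (p - 1)).map T).prod
  set u := T p * T (p + 1) * T (p + 2)
  refine ⟨L * (T p * T (p + 2)), u ^ 2, ?_, ?_, ?_⟩
  · have hL : ∀ j, p ≤ j → j < p + 3 → Commute (T j) L := fun j hj hj' =>
      commute_list_prod_of_forall_mul_eq hz hz2 (by simpa using Nat.Odd.sub_odd hp odd_one) <| by
        simp only [List.mem_map, List.mem_range'_1]
        rintro _ ⟨i, hi, rfl⟩
        exact hanti j i hj' (by omega) (by simp only [Nat.dist]; omega)
    have hYL : SemiconjBy (u ^ 2) L L :=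
      ((((hL p le_rfl (by omega)).mul_left (hL (p + 1) (by omega) (by omega))).mul_left
        (hL (p + 2) (by omega) (by omega))).pow_left 2 : Commute _ _)
    have hu4 : u ^ 4 ∈ center G := hker <| by
      have hπu : π u = ((List.range' p 4).map x).formPerm := by
        rw [← map_prod_map_range'_eq_formPerm π (T := T) (s := p) (k := 3)
          (fun i _ hi => hπT i (by omega))]
        simp [u, List.range'_succ, mul_assoc]
      rw [MonoidHom.mem_ker, map_pow, hπu]
      simpa using List.formPerm_pow_length_eq_one_of_nodup _ (nodup_map_range' hx le_rfl)
    have hY := hYL.mul_right (semiconjBy_mul_mul_sq_mul hz hz2 (hbraid p (by omega))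
      (hbraid (p + 1) (by omega)) (hanti p (p + 2) (by omega) (by omega)
        (by simp only [Nat.dist]; omega)) hu4)
    rwa [← mul_assoc L z, mem_center_iff.mp hz L, mul_assoc] at hY
  · rw [map_mul, map_mul, hπT p (by omega), hπT (p + 2) (by omega),
      map_prod_map_range'_eq_formPerm π fun i _ hi => hπT i (by omega), Nat.sub_add_cancel (by omega)]
    exact cycleType_formPerm_mul_swap_mul_swap hp2 hx
  · rw [mem_alternatingGroup, map_pow, map_pow, Int.units_sq]

namespace FDRep

open CategoryTheory

variable {k G : Type*} [Field k] [IsAlgClosed k] [Group G] (V : FDRep k G) [Simple V]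

theorem exists_ρ_eq_smul_one_of_mem_center {c : G} (hc : c ∈ center G) :
    ∃ a : k, V.ρ c = a • 1 := by
  let f : V ⟶ V := ⟨Action.ρ V c, fun x => by
    change Action.ρ V c * Action.ρ V x = Action.ρ V x * Action.ρ V c
    rw [← map_mul, ← map_mul, mem_center_iff.mp hc x]⟩
  obtain ⟨a, ha⟩ := endomorphism_simple_eq_smul_id k f
  exact ⟨a, congrArg (fun φ : V ⟶ V => φ.hom.hom.hom) ha.symm⟩

theorem character_eq_zero_of_semiconjBy {c g y : G} (hc : c ∈ center G)
    (hy : SemiconjBy y g (c * g)) (hc1 : V.character c ≠ V.character 1) :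
    V.character g = 0 := by
  obtain ⟨a, ha⟩ := V.exists_ρ_eq_smul_one_of_mem_center hc
  have hchar : ∀ x, V.character (c * x) = a * V.character x := fun x => by
    simp only [FDRep.character, map_mul, ha, smul_mul_assoc, one_mul, map_smul, smul_eq_mul]
  have ha1 : a ≠ 1 := by
    rintro rfl
    exact hc1 (by simpa using hchar 1)
  have hg : V.character g = a * V.character g := by
    rw [← hchar, eq_mul_inv_of_mul_eq hy.symm, FDRep.char_conj]
  have : (a - 1) * V.character g = 0 := by linear_combination -hg
  exact (mul_eq_zero.mp this).resolve_left (sub_ne_zero.mpr ha1)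

end FDRep

namespace DoubleCover

variable {n α : ℕ}

@[simp]
theorem mk_zw : PresentedGroup.mk (rels n α) (zw n) = z n α := rfl

@[simp]
theorem mk_tw (j : Fin (n - 1)) : PresentedGroup.mk (rels n α) (tw n j) = t n α j := rfl

theorem z_sq : z n α ^ 2 = 1 := by
  simpa using PresentedGroup.one_of_mem (rels := rels n α) (Or.inl rfl)

theorem t_sq (j : Fin (n - 1)) : t n α j ^ 2 = z n α ^ α := by
  simpa [mul_inv_eq_one] using
    PresentedGroup.one_of_mem (rels := rels n α) (Or.inr (Or.inl ⟨j, rfl⟩))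

theorem t_mul_t_pow_three {j k : Fin (n - 1)} (h : (j : ℕ) + 1 = k) :
    (t n α j * t n α k) ^ 3 = z n α ^ α := by
  simpa [mul_inv_eq_one] using
    PresentedGroup.one_of_mem (rels := rels n α) (Or.inr (Or.inr (Or.inl ⟨j, k, h, rfl⟩)))

theorem z_mul_t (j : Fin (n - 1)) : z n α * t n α j = t n α j * z n α := by
  simpa [mul_inv_eq_iff_eq_mul] using
    PresentedGroup.one_of_mem (rels := rels n α) (Or.inr (Or.inr (Or.inr (Or.inl ⟨j, rfl⟩))))

theorem t_mul_t_of_one_lt_dist {j k : Fin (n - 1)} (h : 1 < Nat.dist j k) :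
    t n α j * t n α k = z n α * (t n α k * t n α j) := by
  rw [← mul_assoc]
  simpa only [map_mul, map_inv, mk_zw, mk_tw, mul_inv_eq_one] using
    PresentedGroup.one_of_mem (rels := rels n α) (Or.inr (Or.inr (Or.inr (Or.inr ⟨j, k, h, rfl⟩))))

theorem z_mem_center : z n α ∈ center (Cover n α) :=
  mem_center_iff.mpr fun x => PresentedGroup.generated_by _ (centralizer {z n α})
    (by rintro (_ | j) _ rfl; exacts [rfl, z_mul_t j]) x _ rfl |>.symm

theorem t_braid {j k : Fin (n - 1)} (h : (j : ℕ) + 1 = k) :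
    t n α j * t n α k * t n α j = t n α k * t n α j * t n α k :=
  braid_of_sq_eq_of_mul_pow_three (t_sq j) (t_sq k)
    (by rw [← pow_mul, mul_comm, pow_mul, z_sq, one_pow]) (t_mul_t_pow_three h)

theorem exists_semiconjBy_z_mul {p : ℕ} (hp : Odd p) (hp2 : 2 ≤ p) (hn : p + 4 ≤ n)
    (π : Cover n α →* Perm (Fin n)) (hπt : ∀ j : Fin (n - 1), π (t n α j) =
      swap (Fin.castLE (by omega) j) (Fin.castLE (by omega) j.succ))
    (hker : π.ker ≤ center (Cover n α)) :
    ∃ g₀ Y : Cover n α, SemiconjBy Y g₀ (z n α * g₀) ∧ (π g₀).cycleType = {p, 2, 2} ∧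
      π Y ∈ alternatingGroup (Fin n) := by
  have : NeZero n := ⟨by omega⟩
  have : NeZero (n - 1) := ⟨by omega⟩
  refine exists_semiconjBy_mul_of_cover_relations π hker z_mem_center z_sq
    (T := fun i => t n α (Fin.ofNat (n - 1) i)) (x := Fin.ofNat n) hp hp2 ?_ ?_ ?_ ?_
  · intro i hi j hj hij
    simp only [Set.mem_Iio] at hi hj
    simpa [Nat.mod_eq_of_lt (show i < n by omega), Nat.mod_eq_of_lt (show j < n by omega)]
      using congrArg Fin.val hij
  · intro i hi
    rw [hπt]
    congr 1 <;> ext <;> simp [Nat.mod_eq_of_lt (show i < n - 1 by omega),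
      Nat.mod_eq_of_lt (show i < n by omega), Nat.mod_eq_of_lt (show i + 1 < n by omega)]
  · intro i hi
    exact t_braid (by simp [Nat.mod_eq_of_lt (show i < n - 1 by omega),
      Nat.mod_eq_of_lt (show i + 1 < n - 1 by omega)])
  · intro i j hi hj hij
    refine t_mul_t_of_one_lt_dist ?_
    simpa [Nat.mod_eq_of_lt (show i < n - 1 by omega), Nat.mod_eq_of_lt (show j < n - 1 by omega)]
      using hij

end DoubleCover

/-- Let `p` be an odd prime, `n ≥ p + 4`, and `G = 2.A_n = π⁻¹(A_n)`
with central element `z` of order 2. If `g ∈ G` projects to a permutation of cycle type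
`(p, 2, 2, 1^{n-p-4})`, then every irreducible complex character `χ` of `G` with
`χ(z) ≠ χ(1)` vanishes at `g`. -/
theorem faithful_char_vanishes_cover_An
    (p : ℕ) (hpodd : Odd p)
    (n : ℕ) (hn : p + 4 ≤ n) (α : ℕ)
    (π : DoubleCover.Cover n α →* Equiv.Perm (Fin n))
    (hπt : ∀ j : Fin (n - 1), π (DoubleCover.t n α j) =
      Equiv.swap (Fin.castLE (by omega) j) (Fin.castLE (by omega) j.succ))
    (hπsurj : Function.Surjective π)
    (hπker : π.ker = Subgroup.zpowers (DoubleCover.z n α))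
    (z' : ↥(Subgroup.comap π (alternatingGroup (Fin n))))
    (hz' : (z' : DoubleCover.Cover n α) = DoubleCover.z n α)
    (g : ↥(Subgroup.comap π (alternatingGroup (Fin n))))
    (hg : (π (g : DoubleCover.Cover n α)).cycleType = {p, 2, 2})
    (V : FDRep ℂ ↥(Subgroup.comap π (alternatingGroup (Fin n))))
    (hV : CategoryTheory.Simple V)
    (hfaith : V.character z' ≠ V.character 1) :
    V.character g = 0 := by
  have hp2 : 2 ≤ p := two_le_of_mem_cycleType (σ := π g) (by simp [hg])
  have hker : π.ker ≤ center _ := hπker ▸ zpowers_le.mpr DoubleCover.z_mem_center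
  obtain ⟨g₀, Y, hY, hg₀, hYalt⟩ :=
    DoubleCover.exists_semiconjBy_z_mul hpodd hp2 hn π hπt hker
  obtain ⟨Y', hY'alt, hY'⟩ := exists_mem_comap_semiconjBy_of_isConj π hπsurj hker
    DoubleCover.z_mem_center hY hYalt (isConj_iff_cycleType_eq.mpr (hg₀.trans hg.symm))
  have hz'c : z' ∈ center _ := mem_center_iff.mpr fun x => Subtype.ext <| by
    simpa [hz'] using mem_center_iff.mp DoubleCover.z_mem_center (x : DoubleCover.Cover n α)
  have := hV
  exact V.character_eq_zero_of_semiconjBy hz'c (y := ⟨Y', hY'alt⟩)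
    (Subtype.ext (by simpa [hz'] using hY'.eq)) hfaith
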